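/- Fix m ≥ 1 and k ≥ 1. Let X be a permutation statistic on S_n realizable over a constraint set of size m, i.e., X = Σ_{K∈𝒞} wt(K)·I_K for some finite collection 𝒞 of permutation constraints each of cardinality at most m and real weights wt(K), where I_K(ω) = 1 if ω satisfies K and 0 otherwise. Then for any two partitions λ and μ of n all of whose parts have size at least mk+1, the k-th moments of X over the corresponding conjugacy classes agree: (Σ_{ω∈C_λ} X(ω)^k)/|C_λ| = (Σ_{ω∈C_μ} X(ω)^k)/|C_μ|. -/

import Mathlib

/-!
Expanding `X ω ^ k` as a sum over `k`-tuples of constraints, the `k`-th moment over `C_λ` is a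
weighted sum of the densities `ρ_λ(K) = #{ω ∈ C_λ | ω satisfies K} / #C_λ` of constraints `K` of
size at most `mk`, so it suffices that `ρ_λ(K) = ρ_μ(K)` whenever all cycles are longer than `#K`.
Such a `K` has density zero unless it has an edge `(x, w)` whose head `w` is neither a source nor
another edge's head. Splitting `T = K \ {(x, w)}` according to the value of `ω x`, every value
`j ∉ insert x (vertices T)` is conjugate to `w` and contributes `ρ(K)`, while the remaining
values give constraints that are smaller in `#K + #(vertices K)`. Induction on this measure then
determines `ρ(K)` by quantities that do not depend on the cycle type.
-/

/-- The conjugacy class of `S_n` consisting of permutations of cycle type `lam`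
(Mathlib's `cycleType` omits fixed points, so we compare with the parts of `lam` not equal
to `1`). -/
noncomputable def conjClass (n : ℕ) (lam : n.Partition) : Finset (Equiv.Perm (Fin n)) :=
  Finset.univ.filter fun ω => ω.cycleType = Multiset.filter (fun i => i ≠ 1) lam.parts

namespace PermConstraint

open Finset Equiv Perm

variable {α : Type*} [DecidableEq α]

def Satisfies (ω : Perm α) (K : Finset (α × α)) : Prop :=
  ∀ p ∈ K, ω p.1 = p.2

instance (ω : Perm α) (K : Finset (α × α)) : Decidable (Satisfies ω K) :=
  inferInstanceAs (Decidable (∀ p ∈ K, ω p.1 = p.2))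

def satCount (S : Finset (Perm α)) (K : Finset (α × α)) : ℕ :=
  #{ω ∈ S | Satisfies ω K}

noncomputable def density (S : Finset (Perm α)) (K : Finset (α × α)) : ℝ :=
  satCount S K / #S

def vertices (K : Finset (α × α)) : Finset α :=
  K.image Prod.fst ∪ K.image Prod.snd

lemma vertices_insert (a b : α) (K : Finset (α × α)) :
    vertices (insert (a, b) K) = insert a (insert b (vertices K)) := by
  simp only [vertices, image_insert, insert_union, union_insert]
  exact Finset.insert_comm _ _ _

lemma vertices_mono {K L : Finset (α × α)} (h : K ⊆ L) : vertices K ⊆ vertices L :=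
  union_subset_union (image_subset_image h) (image_subset_image h)

lemma fst_mem_vertices {K : Finset (α × α)} {p : α × α} (hp : p ∈ K) : p.1 ∈ vertices K :=
  mem_union_left _ (mem_image_of_mem _ hp)

lemma snd_mem_vertices {K : Finset (α × α)} {p : α × α} (hp : p ∈ K) : p.2 ∈ vertices K :=
  mem_union_right _ (mem_image_of_mem _ hp)

lemma satisfies_insert {ω : Perm α} {p : α × α} {K : Finset (α × α)} :
    Satisfies ω (insert p K) ↔ ω p.1 = p.2 ∧ Satisfies ω K :=
  forall_mem_insert _ _ _

lemma satisfies_biUnion {ι : Type*} {ω : Perm α} {s : Finset ι} {g : ι → Finset (α × α)} :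
    Satisfies ω (s.biUnion g) ↔ ∀ i ∈ s, Satisfies ω (g i) := by
  simp only [Satisfies, mem_biUnion]
  exact ⟨fun h i hi p hp => h p ⟨i, hi, hp⟩, fun h p ⟨i, hi, hp⟩ => h i hi p hp⟩

lemma satisfies_conj_image {ω σ : Perm α} {K : Finset (α × α)} :
    Satisfies (σ * ω * σ⁻¹) (K.image (Prod.map σ σ)) ↔ Satisfies ω K := by
  simp only [Satisfies, forall_mem_image, Prod.map_fst, Prod.map_snd, mul_apply, Perm.coe_inv,
    symm_apply_apply, EmbeddingLike.apply_eq_iff_eq]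

lemma satCount_empty (S : Finset (Perm α)) : satCount S ∅ = #S := by
  simp [satCount, Satisfies]

lemma satCount_eq_zero_of_ne_of_same_snd {S : Finset (Perm α)} {K : Finset (α × α)} {a a' b : α}
    (h : (a, b) ∈ K) (h' : (a', b) ∈ K) (hne : a ≠ a') : satCount S K = 0 := by
  rw [satCount, card_eq_zero, filter_eq_empty_iff]
  exact fun ω _ hω => hne (ω.injective ((hω _ h).trans (hω _ h').symm))

lemma satCount_image_conj {S : Finset (Perm α)} (hS : ∀ σ ω, σ * ω * σ⁻¹ ∈ S ↔ ω ∈ S)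
    (σ : Perm α) (K : Finset (α × α)) : satCount S (K.image (Prod.map σ σ)) = satCount S K := by
  refine card_nbij' (fun ω => σ⁻¹ * ω * σ) (fun ω => σ * ω * σ⁻¹) ?_ ?_ ?_ ?_
  · intro ω hω
    simp only [mem_coe, mem_filter] at hω ⊢
    rw [← hS σ, ← satisfies_conj_image (σ := σ)]
    simpa [mul_assoc] using hω
  · intro ω hω
    simp only [mem_coe, mem_filter] at hω ⊢
    exact ⟨(hS σ ω).2 hω.1, satisfies_conj_image.2 hω.2⟩
  · intro ω _; simp [mul_assoc]
  · intro ω _; simp [mul_assoc]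

lemma satCount_insert_eq_of_notMem_vertices {S : Finset (Perm α)}
    (hS : ∀ σ ω, σ * ω * σ⁻¹ ∈ S ↔ ω ∈ S) {T : Finset (α × α)} {x w j : α}
    (hw : w ∉ vertices T) (hj : j ∉ vertices T) (hxw : x ≠ w) (hxj : x ≠ j) :
    satCount S (insert (x, j) T) = satCount S (insert (x, w) T) := by
  have hfix : ∀ a ∈ vertices T, swap w j a = a := fun a ha =>
    swap_apply_of_ne_of_ne (ne_of_mem_of_not_mem ha hw) (ne_of_mem_of_not_mem ha hj)
  have himage : (insert (x, w) T).image (Prod.map (swap w j) (swap w j)) = insert (x, j) T := by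
    rw [image_insert, Prod.map_apply, swap_apply_of_ne_of_ne hxw hxj, swap_apply_left]
    congr 1
    refine (image_congr fun p hp => ?_).trans image_id
    exact Prod.ext (hfix _ (fst_mem_vertices hp)) (hfix _ (snd_mem_vertices hp))
  rw [← himage, satCount_image_conj hS]

lemma sum_pow_div_card_eq_sum_density (S : Finset (Perm α)) (C : Finset (Finset (α × α)))
    (wt : Finset (α × α) → ℝ) (X : Perm α → ℝ)
    (hX : ∀ ω, X ω = ∑ K ∈ C, wt K * if Satisfies ω K then 1 else 0) (k : ℕ) :
    (∑ ω ∈ S, X ω ^ k) / #S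
      = ∑ g ∈ Fintype.piFinset fun _ : Fin k => C,
          (∏ i, wt (g i)) * density S (univ.biUnion g) := by
  have hpow : ∀ ω, X ω ^ k = ∑ g ∈ Fintype.piFinset fun _ : Fin k => C,
      (∏ i, wt (g i)) * if Satisfies ω (univ.biUnion g) then 1 else 0 := by
    intro ω
    rw [← Fin.prod_const, hX, prod_univ_sum]
    refine sum_congr rfl fun g _ => ?_
    simp only [prod_mul_distrib, prod_boole, satisfies_biUnion]
    congr
  rw [sum_congr rfl fun ω _ => hpow ω, sum_comm, sum_div]
  refine sum_congr rfl fun g _ => ?_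
  rw [← mul_sum, sum_boole, mul_div_assoc]
  rfl

variable [Fintype α]

lemma satCount_eq_sum_insert (S : Finset (Perm α)) (K : Finset (α × α)) (x : α) :
    satCount S K = ∑ j, satCount S (insert (x, j) K) := by
  rw [satCount, card_eq_sum_card_fiberwise (f := fun ω => ω x) (t := univ) fun _ _ => mem_univ _]
  refine sum_congr rfl fun j _ => ?_
  rw [satCount, filter_filter]
  simp only [satisfies_insert, and_comm]

lemma card_support_cycleOf_le_of_mapsTo {ω : Perm α} {A : Finset α} (hA : ∀ a ∈ A, ω a ∈ A)
    {a : α} (ha : a ∈ A) : #(ω.cycleOf a).support ≤ #A := by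
  have hpow : ∀ i : ℕ, (ω ^ i) a ∈ A := by
    intro i
    induction i with
    | zero => simpa
    | succ i ih => rw [pow_succ', mul_apply]; exact hA _ ih
  refine card_le_card fun y hy => ?_
  obtain ⟨i, -, rfl⟩ := (mem_support_cycleOf_iff.mp hy).1.exists_pow_eq'
  exact hpow i

/-- A permutation satisfying `K` maps the sources of `K` into themselves, so it has a cycle of
length at most `#K`. -/
lemma satCount_eq_zero_of_forall_snd_mem {S : Finset (Perm α)} {K : Finset (α × α)}
    (hS : ∀ ω ∈ S, ∀ x, #K < #(ω.cycleOf x).support) (hK : K.Nonempty)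
    (h : ∀ p ∈ K, p.2 ∈ K.image Prod.fst) : satCount S K = 0 := by
  rw [satCount, card_eq_zero, filter_eq_empty_iff]
  intro ω hωS hω
  obtain ⟨p, hp⟩ := hK
  have hmaps : ∀ a ∈ K.image Prod.fst, ω a ∈ K.image Prod.fst := by
    intro a ha
    obtain ⟨q, hq, rfl⟩ := mem_image.mp ha
    rw [hω q hq]
    exact h q hq
  have := card_support_cycleOf_le_of_mapsTo hmaps (mem_image_of_mem _ hp)
  have := hS ω hωS p.1
  have := card_image_le (s := K) (f := Prod.fst)
  omega

/-- Pinning `x` to any `j ∉ insert x (vertices T)` is conjugate to pinning it to `w`. -/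
lemma density_eq_card_compl_mul_add_sum {S : Finset (Perm α)}
    (hS : ∀ σ ω, σ * ω * σ⁻¹ ∈ S ↔ ω ∈ S) {T : Finset (α × α)} {x w : α}
    (hw : w ∉ vertices T) (hxw : x ≠ w) :
    density S T = #(insert x (vertices T))ᶜ * density S (insert (x, w) T)
      + ∑ j ∈ insert x (vertices T), density S (insert (x, j) T) := by
  have hcount : satCount S T = #(insert x (vertices T))ᶜ * satCount S (insert (x, w) T)
      + ∑ j ∈ insert x (vertices T), satCount S (insert (x, j) T) := by
    rw [satCount_eq_sum_insert S T x, ← sum_add_sum_compl (insert x (vertices T)), add_comm,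
      sum_congr rfl fun j hj => ?_, sum_const, smul_eq_mul]
    rw [mem_compl, mem_insert, not_or] at hj
    exact satCount_insert_eq_of_notMem_vertices hS hw hj.2 hxw (Ne.symm hj.1)
  simp only [density, hcount]
  push_cast
  rw [add_div, sum_div, mul_div_assoc]

/-- At a fixed point `x`, `#(ω.cycleOf x).support = 0`, so fixed points are excluded too. -/
structure LongCycleClass (c : ℕ) (S : Finset (Perm α)) : Prop where
  conj_mem_iff : ∀ σ ω, σ * ω * σ⁻¹ ∈ S ↔ ω ∈ S
  lt_card_support_cycleOf : ∀ ω ∈ S, ∀ x, c < #(ω.cycleOf x).support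

theorem density_eq_density {c : ℕ} {S₁ S₂ : Finset (Perm α)} (h₁ : LongCycleClass c S₁)
    (h₂ : LongCycleClass c S₂) (hne₁ : S₁.Nonempty) (hne₂ : S₂.Nonempty) {K : Finset (α × α)}
    (hK : #K ≤ c) : density S₁ K = density S₂ K := by
  induction hN : #K + #(vertices K) using Nat.strong_induction_on generalizing K with
  | _ N ih =>
  subst hN
  rcases K.eq_empty_or_nonempty with rfl | hKne
  · simp [density, satCount_empty, hne₁.card_pos.ne', hne₂.card_pos.ne']
  by_cases hsrc : ∀ p ∈ K, p.2 ∈ K.image Prod.fst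
  · have hlong {S : Finset (Perm α)} (h : LongCycleClass c S) :
        ∀ ω ∈ S, ∀ x, #K < #(ω.cycleOf x).support :=
      fun ω hω x => hK.trans_lt (h.lt_card_support_cycleOf ω hω x)
    simp [density, satCount_eq_zero_of_forall_snd_mem (hlong h₁) hKne hsrc,
      satCount_eq_zero_of_forall_snd_mem (hlong h₂) hKne hsrc]
  obtain ⟨⟨x, w⟩, hxw, hw⟩ := not_forall₂.mp hsrc
  by_cases hinj : ∃ a ≠ x, (a, w) ∈ K
  · obtain ⟨a, hax, haw⟩ := hinj
    simp [density, satCount_eq_zero_of_ne_of_same_snd haw hxw hax]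
  set T := K.erase (x, w)
  have hKT : insert (x, w) T = K := insert_erase hxw
  have hxw' : x ≠ w := fun h => hw (h ▸ mem_image_of_mem Prod.fst hxw)
  have hwT : w ∉ vertices T := by
    intro hwv
    rcases mem_union.mp hwv with h | h
    · obtain ⟨p, hp, rfl⟩ := mem_image.mp h
      exact hw (mem_image_of_mem _ (mem_of_mem_erase hp))
    · obtain ⟨⟨a, b⟩, hp, rfl⟩ := mem_image.mp h
      obtain ⟨hne, hpK⟩ := mem_erase.mp hp
      exact hinj ⟨a, fun hax => hne (by rw [hax]), hpK⟩
  set V := insert x (vertices T) with hV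
  have hwV : w ∉ V := fun h => (mem_insert.mp h).elim (fun h' => hxw' h'.symm) hwT
  have hVK : V ⊆ (vertices K).erase w := fun a ha =>
    mem_erase.mpr ⟨fun h => hwV (h ▸ ha),
      insert_subset (fst_mem_vertices hxw) (vertices_mono (erase_subset _ _)) ha⟩
  have ihT : density S₁ T = density S₂ T := by
    refine ih _ ?_ (card_erase_le.trans hK) rfl
    exact add_lt_add_of_lt_of_le (card_erase_lt_of_mem hxw)
      (card_le_card (vertices_mono (erase_subset _ _)))
  have ihV : ∀ j ∈ V, density S₁ (insert (x, j) T) = density S₂ (insert (x, j) T) := by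
    intro j hj
    have hcard : #(insert (x, j) T) ≤ #K :=
      (card_insert_le _ _).trans (card_erase_add_one hxw).le
    have hvert : vertices (insert (x, j) T) ⊆ V := by
      rw [vertices_insert]
      exact insert_subset (mem_insert_self _ _) (insert_subset hj (subset_insert _ _))
    refine ih _ (add_lt_add_of_le_of_lt hcard ?_) (hcard.trans hK) rfl
    exact (card_le_card (hvert.trans hVK)).trans_lt (card_erase_lt_of_mem (snd_mem_vertices hxw))
  have hsplit₁ := density_eq_card_compl_mul_add_sum h₁.conj_mem_iff hwT hxw'
  have hsplit₂ := density_eq_card_compl_mul_add_sum h₂.conj_mem_iff hwT hxw'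
  rw [hKT, ← hV] at hsplit₁ hsplit₂
  rw [ihT, sum_congr rfl ihV, hsplit₂] at hsplit₁
  have hpos : (#Vᶜ : ℝ) ≠ 0 :=
    Nat.cast_ne_zero.mpr (card_ne_zero.mpr ⟨w, mem_compl.mpr hwV⟩)
  exact (mul_left_cancel₀ hpos (add_right_cancel hsplit₁)).symm

end PermConstraint

open Finset Equiv Perm

lemma conj_mem_conjClass_iff {n : ℕ} {lam : n.Partition} (σ ω : Perm (Fin n)) :
    σ * ω * σ⁻¹ ∈ conjClass n lam ↔ ω ∈ conjClass n lam := by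
  simp [conjClass, cycleType_conj]

lemma conjClass_nonempty (n : ℕ) (lam : n.Partition) : (conjClass n lam).Nonempty := by
  have hsum : (lam.parts.filter (· ≠ 1)).sum ≤ Fintype.card (Fin n) := by
    rw [Fintype.card_fin]
    calc (lam.parts.filter (· ≠ 1)).sum
        ≤ (lam.parts.filter (· ≠ 1)).sum + (lam.parts.filter fun a => ¬a ≠ 1).sum := le_self_add
      _ = n := by rw [← Multiset.sum_add, Multiset.filter_add_not, lam.parts_sum]
  have htwo : ∀ a ∈ lam.parts.filter (· ≠ 1), 2 ≤ a := fun a ha => by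
    obtain ⟨hmem, hne⟩ := Multiset.mem_filter.mp ha
    have := lam.parts_pos hmem
    omega
  obtain ⟨ω, hω⟩ := (exists_with_cycleType_iff (Fin n)).mpr ⟨hsum, htwo⟩
  exact ⟨ω, by simp [conjClass, hω]⟩

lemma lt_card_support_cycleOf_of_mem_conjClass {n c : ℕ} {lam : n.Partition} (hc : 0 < c)
    (hlam : ∀ p ∈ lam.parts, c < p) {ω : Perm (Fin n)} (hω : ω ∈ conjClass n lam) (x : Fin n) :
    c < #(ω.cycleOf x).support := by
  have hparts : ω.cycleType = lam.parts := by
    rw [(mem_filter.mp hω).2, Multiset.filter_eq_self]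
    exact fun p hp => (lt_of_le_of_lt hc (hlam p hp)).ne'
  have hx : x ∈ ω.support := by
    have hcard : #ω.support = Fintype.card (Fin n) := by
      rw [← sum_cycleType, hparts, lam.parts_sum, Fintype.card_fin]
    exact eq_univ_of_card _ hcard ▸ mem_univ x
  refine hlam _ ?_
  rw [← hparts, cycleType_def]
  exact Multiset.mem_map.mpr ⟨_, cycleOf_mem_cycleFactorsFinset_iff.mpr hx, rfl⟩

lemma longCycleClass_conjClass {n c : ℕ} {lam : n.Partition} (hc : 0 < c)
    (hlam : ∀ p ∈ lam.parts, c < p) : PermConstraint.LongCycleClass c (conjClass n lam) where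
  conj_mem_iff := conj_mem_conjClass_iff
  lt_card_support_cycleOf _ hω := lt_card_support_cycleOf_of_mem_conjClass hc hlam hω

open PermConstraint

theorem stmt17 (n m k : ℕ) (hm : 1 ≤ m) (hk : 1 ≤ k) (lam mu : n.Partition)
    (hlam : ∀ p ∈ lam.parts, m * k + 1 ≤ p) (hmu : ∀ p ∈ mu.parts, m * k + 1 ≤ p)
    (C : Finset (Finset (Fin n × Fin n))) (hsize : ∀ K ∈ C, K.card ≤ m)
    (wt : Finset (Fin n × Fin n) → ℝ) (X : Equiv.Perm (Fin n) → ℝ)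
    (hX : ∀ ω, X ω = ∑ K ∈ C, wt K * (if ∀ p ∈ K, ω p.1 = p.2 then 1 else 0)) :
    (∑ ω ∈ conjClass n lam, X ω ^ k) / ((conjClass n lam).card : ℝ)
      = (∑ ω ∈ conjClass n mu, X ω ^ k) / ((conjClass n mu).card : ℝ) := by
  have hc : 0 < m * k := Nat.mul_pos hm hk
  -- `hX` decides `∀ p ∈ K, _` through `Fintype`, `Satisfies` through `Finset`.
  have hX' : ∀ ω, X ω = ∑ K ∈ C, wt K * if Satisfies ω K then 1 else 0 := fun ω => by
    rw [hX]
    congr!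
  rw [sum_pow_div_card_eq_sum_density _ C wt X hX', sum_pow_div_card_eq_sum_density _ C wt X hX']
  refine sum_congr rfl fun g hg => ?_
  have hcard : #(univ.biUnion g) ≤ m * k := by
    simpa [mul_comm] using
      card_biUnion_le_card_mul univ g m fun i _ => hsize _ (Fintype.mem_piFinset.mp hg i)
  rw [density_eq_density (longCycleClass_conjClass hc hlam) (longCycleClass_conjClass hc hmu)
    (conjClass_nonempty n lam) (conjClass_nonempty n mu) hcard]
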